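/- For an invertible symmetric matrix A, if all the Euclidean norms of the columns of A⁻¹ are pairwise distinct, then for any matrix B = A.submatrix σ σ (σ a permutation), the permutation σ is uniquely determined by matching column norms: σ(k) is the unique index j with ‖column j of A⁻¹‖ = ‖column k of B⁻¹‖. -/

import Mathlib

theorem EuclideanSpace.norm_symm_equiv_comp {ι ι' 𝕜 : Type*} [Fintype ι] [Fintype ι'] [RCLike 𝕜]
    (f : ι' → 𝕜) (e : ι ≃ ι') :
    ‖(WithLp.equiv 2 (ι → 𝕜)).symm (f ∘ e)‖ = ‖(WithLp.equiv 2 (ι' → 𝕜)).symm f‖ := by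
  simp only [EuclideanSpace.norm_eq, WithLp.equiv_symm_apply, Function.comp_apply]
  rw [e.sum_comp fun i => ‖f i‖ ^ 2]

theorem stmt_17_general {n : ℕ} (A : Matrix (Fin n) (Fin n) ℝ)
    (hinj : Function.Injective fun j : Fin n =>
      ‖(WithLp.equiv 2 (Fin n → ℝ)).symm (fun i => A⁻¹ i j)‖)
    (σ : Equiv.Perm (Fin n)) (B : Matrix (Fin n) (Fin n) ℝ)
    (hB : B = A.submatrix σ σ) (k : Fin n) :
    ‖(WithLp.equiv 2 (Fin n → ℝ)).symm (fun i => A⁻¹ i (σ k))‖ =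
      ‖(WithLp.equiv 2 (Fin n → ℝ)).symm (fun i => B⁻¹ i k)‖ ∧
    ∀ j, ‖(WithLp.equiv 2 (Fin n → ℝ)).symm (fun i => A⁻¹ i j)‖ =
        ‖(WithLp.equiv 2 (Fin n → ℝ)).symm (fun i => B⁻¹ i k)‖ → j = σ k := by
  have hBinv : B⁻¹ = A⁻¹.submatrix σ σ := by
    rw [hB, Matrix.inv_submatrix_equiv]
  have hcol : ‖(WithLp.equiv 2 (Fin n → ℝ)).symm (fun i => A⁻¹ i (σ k))‖ =
      ‖(WithLp.equiv 2 (Fin n → ℝ)).symm (fun i => B⁻¹ i k)‖ := by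
    rw [hBinv]
    exact (EuclideanSpace.norm_symm_equiv_comp (fun i => A⁻¹ i (σ k)) σ).symm
  exact ⟨hcol, fun j hj => hinj (hj.trans hcol.symm)⟩

theorem stmt_17 {n : ℕ} (A : Matrix (Fin n) (Fin n) ℝ) (hA : IsUnit A.det)
    (hsymm : A.IsSymm)
    (hinj : Function.Injective fun j : Fin n =>
      ‖(WithLp.equiv 2 (Fin n → ℝ)).symm (fun i => A⁻¹ i j)‖)
    (σ : Equiv.Perm (Fin n)) (B : Matrix (Fin n) (Fin n) ℝ)
    (hB : B = A.submatrix σ σ) (k : Fin n) :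
    ‖(WithLp.equiv 2 (Fin n → ℝ)).symm (fun i => A⁻¹ i (σ k))‖ =
      ‖(WithLp.equiv 2 (Fin n → ℝ)).symm (fun i => B⁻¹ i k)‖ ∧
    ∀ j, ‖(WithLp.equiv 2 (Fin n → ℝ)).symm (fun i => A⁻¹ i j)‖ =
        ‖(WithLp.equiv 2 (Fin n → ℝ)).symm (fun i => B⁻¹ i k)‖ → j = σ k :=
  stmt_17_general A hinj σ B hB k
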